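/- arXiv:2512.23402 — 2 statements merged into one kernel-verified Lean document; each statement's English description precedes it below -/
import Mathlib

section
/- Let x be irrational with regular continued fraction expansion x = a_0 + 1/(a_1 + 1/(a_2 + ⋯)). Then the backward continued fraction expansion of x is ⌊x⌋ + 1 − [2,…,2 (a_1 − 1 times), a_2 + 2, 2,…,2 (a_3 − 1 times), a_4 + 2, …], i.e., the BCF digit sequence of x is obtained by replacing each pair (a_{2k−1}, a_{2k}) by a block of a_{2k−1} − 1 twos followed by the digit a_{2k} + 2. -/
/-!
Write `y ∈ (0, 1)` as `y = 1 / (a + z)` with `a = ⌊1 / y⌋ ≥ 1` and `z ∈ (0, 1)`. Since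
`1 / (1 - 1 / (w + 1)) = 1 / w + 1`, the Rényi map sends `1 / (w + 1)` to `fract (1 / w)` with
digit `⌊1 / w⌋ + 2`. Starting from `1 / (a + z)` it therefore walks down through
`1 / (a - 1 + z), …, 1 / (1 + z)`, emitting `a - 1` digits `2`, then emits `⌊1 / z⌋ + 2` and lands
on `fract (1 / z)`. So `a_{2k+1}` Rényi steps consume the two partial quotients `a_{2k+1}, a_{2k+2}`,
and after `a_1 + a_3 + ⋯ + a_{2k-1}` steps the Rényi orbit of `fract x` is at `cfX x (2k)`.
-/

noncomputable def cfX (x : ℝ) : ℕ → ℝ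
  | 0 => Int.fract x
  | n + 1 => Int.fract (1 / cfX x n)

/-- Regular continued fraction partial quotients. -/
noncomputable def rcfA (x : ℝ) : ℕ → ℤ
  | 0 => ⌊x⌋
  | n + 1 => ⌊1 / cfX x n⌋

/-- The Renyi backward continued fraction map. -/
noncomputable def renyi (y : ℝ) : ℝ := Int.fract (1 / (1 - y))

/-- The (n+1)-st backward continued fraction digit of the fractional part of x. -/
noncomputable def bDigit (x : ℝ) (n : ℕ) : ℤ := ⌊1 / (1 - renyi^[n] (Int.fract x))⌋ + 1

open Finset

section Renyi

variable {w z : ℝ}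

lemma one_div_one_sub_one_div_add_one (hw : 0 < w) : 1 / (1 - 1 / (w + 1)) = 1 / w + 1 := by
  have : w + 1 ≠ 0 := by positivity
  rw [one_sub_div this, add_sub_cancel_right, one_div_div, add_div, div_self hw.ne', add_comm]

lemma renyi_one_div_add_one (hw : 0 < w) : renyi (1 / (w + 1)) = Int.fract (1 / w) := by
  rw [renyi, one_div_one_sub_one_div_add_one hw, Int.fract_add_one]

lemma floor_one_div_one_sub_one_div_add_one (hw : 0 < w) :
    ⌊1 / (1 - 1 / (w + 1))⌋ = ⌊1 / w⌋ + 1 := by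
  rw [one_div_one_sub_one_div_add_one hw, Int.floor_add_one]

lemma one_div_mem_Ico_of_one_lt (hw : 1 < w) : 1 / w ∈ Set.Ico (0 : ℝ) 1 :=
  ⟨by positivity, (div_lt_one (by linarith)).2 hw⟩

lemma renyi_iterate_one_div_add_natCast (hw : 1 < w) (i : ℕ) :
    renyi^[i] (1 / (w + i)) = 1 / w := by
  induction i with
  | zero => simp
  | succ i ih =>
    have hwi : 1 < w + i := by have : (0 : ℝ) ≤ i := i.cast_nonneg; linarith
    rw [Function.iterate_succ_apply, Nat.cast_succ, ← add_assoc,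
      renyi_one_div_add_one (by linarith), Int.fract_eq_self.2 (one_div_mem_Ico_of_one_lt hwi), ih]

variable {a i : ℕ}

lemma renyi_iterate_pred_one_div_natCast_add (ha : 1 ≤ a) (hz : 0 < z) :
    renyi^[a - 1] (1 / (a + z)) = 1 / (z + 1) := by
  have hcast : (a : ℝ) + z = z + 1 + (a - 1 : ℕ) := by
    rw [Nat.cast_sub ha]
    ring
  rw [hcast, renyi_iterate_one_div_add_natCast (by linarith)]

lemma renyi_iterate_one_div_natCast_add (ha : 1 ≤ a) (hz : 0 < z) :
    renyi^[a] (1 / (a + z)) = Int.fract (1 / z) := by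
  have h := congrArg renyi (renyi_iterate_pred_one_div_natCast_add ha hz)
  rwa [← Function.iterate_succ_apply' renyi, Nat.succ_eq_add_one, Nat.sub_add_cancel ha,
    renyi_one_div_add_one hz] at h

lemma floor_one_div_one_sub_renyi_iterate_of_lt (hz : 0 < z) (hi : i + 1 < a) :
    ⌊1 / (1 - renyi^[i] (1 / (a + z)))⌋ = 1 := by
  have hw : 1 < ((a - (i + 1) : ℕ) : ℝ) + z := by
    have : (1 : ℝ) ≤ (a - (i + 1) : ℕ) := by exact_mod_cast (by omega : 1 ≤ a - (i + 1))
    linarith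
  have hcast : (a : ℝ) + z = ((a - (i + 1) : ℕ) + z + 1) + i := by
    rw [Nat.cast_sub hi.le]
    push_cast
    ring
  rw [hcast, renyi_iterate_one_div_add_natCast (by linarith),
    floor_one_div_one_sub_one_div_add_one (by linarith),
    Int.floor_eq_zero_iff.2 (one_div_mem_Ico_of_one_lt hw), zero_add]

lemma floor_one_div_one_sub_renyi_iterate_pred (ha : 1 ≤ a) (hz : 0 < z) :
    ⌊1 / (1 - renyi^[a - 1] (1 / (a + z)))⌋ = ⌊1 / z⌋ + 1 := by
  rw [renyi_iterate_pred_one_div_natCast_add ha hz, floor_one_div_one_sub_one_div_add_one hz]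

end Renyi

section ContinuedFraction

variable {x : ℝ}

lemma irrational_cfX (hx : Irrational x) : ∀ n, Irrational (cfX x n)
  | 0 => hx.sub_intCast _
  | n + 1 => by
    have : Irrational (1 / cfX x n) := by rw [one_div]; exact (irrational_cfX hx n).inv
    exact this.sub_intCast _

lemma cfX_nonneg (x : ℝ) (n : ℕ) : 0 ≤ cfX x n := by
  cases n <;> exact Int.fract_nonneg _

lemma cfX_pos (hx : Irrational x) (n : ℕ) : 0 < cfX x n :=
  (cfX_nonneg x n).lt_of_ne' (irrational_cfX hx n).ne_zero

lemma cfX_lt_one (x : ℝ) (n : ℕ) : cfX x n < 1 := by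
  cases n <;> exact Int.fract_lt_one _

lemma one_le_toNat_rcfA_succ (hx : Irrational x) (n : ℕ) : 1 ≤ (rcfA x (n + 1)).toNat := by
  have h : (1 : ℝ) ≤ 1 / cfX x n := by
    rw [le_div_iff₀ (cfX_pos hx n)]
    linarith [cfX_lt_one x n]
  have : 1 ≤ rcfA x (n + 1) := Int.le_floor.2 (by exact_mod_cast h)
  omega

lemma cfX_eq_one_div (x : ℝ) (n : ℕ) :
    cfX x n = 1 / ((rcfA x (n + 1)).toNat + cfX x (n + 1)) := by
  have hnonneg : 0 ≤ rcfA x (n + 1) :=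
    Int.floor_nonneg.2 (one_div_nonneg.2 (cfX_nonneg x n))
  have hcast : ((rcfA x (n + 1)).toNat : ℝ) = rcfA x (n + 1) := by
    exact_mod_cast Int.toNat_of_nonneg hnonneg
  rw [hcast]
  exact (one_div_one_div _).symm.trans (congrArg _ (Int.floor_add_fract _).symm)

lemma renyi_iterate_cfX (hx : Irrational x) (n : ℕ) :
    renyi^[(rcfA x (n + 1)).toNat] (cfX x n) = cfX x (n + 2) := by
  rw [cfX_eq_one_div x n,
    renyi_iterate_one_div_natCast_add (one_le_toNat_rcfA_succ hx n) (cfX_pos hx (n + 1))]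
  rfl

/-- The BCF position `a_1 + a_3 + ⋯ + a_{2k-1}` at which the `k`-th digit `a_{2k} + 2` occurs. -/
noncomputable def bcfPos (x : ℝ) (k : ℕ) : ℕ := ∑ j ∈ Icc 1 k, (rcfA x (2 * j - 1)).toNat

lemma bcfPos_succ (x : ℝ) (k : ℕ) :
    bcfPos x (k + 1) = bcfPos x k + (rcfA x (2 * k + 1)).toNat := by
  rw [bcfPos, sum_Icc_succ_top (by omega)]
  rfl

lemma renyi_iterate_bcfPos (hx : Irrational x) (k : ℕ) :
    renyi^[bcfPos x k] (Int.fract x) = cfX x (2 * k) := by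
  induction k with
  | zero => rfl
  | succ k ih =>
    rw [bcfPos_succ, add_comm, Function.iterate_add_apply, ih, renyi_iterate_cfX hx, mul_add_one]

lemma bDigit_bcfPos_add (hx : Irrational x) (k i : ℕ) :
    bDigit x (bcfPos x k + i) =
      ⌊1 / (1 - renyi^[i] (1 / ((rcfA x (2 * k + 1)).toNat + cfX x (2 * k + 1))))⌋ + 1 := by
  rw [bDigit, add_comm (bcfPos x k), Function.iterate_add_apply, renyi_iterate_bcfPos hx,
    cfX_eq_one_div]

lemma bDigit_eq_two (hx : Irrational x) (k i : ℕ) (hi : i + 1 < (rcfA x (2 * k + 1)).toNat) :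
    bDigit x (bcfPos x k + i) = 2 := by
  rw [bDigit_bcfPos_add hx, floor_one_div_one_sub_renyi_iterate_of_lt (cfX_pos hx _) hi]
  rfl

lemma bDigit_bcfPos_succ_sub_one (hx : Irrational x) (k : ℕ) :
    bDigit x (bcfPos x (k + 1) - 1) = rcfA x (2 * k + 2) + 2 := by
  have ha := one_le_toNat_rcfA_succ hx (2 * k)
  rw [bcfPos_succ, Nat.add_sub_assoc ha, bDigit_bcfPos_add hx,
    floor_one_div_one_sub_renyi_iterate_pred ha (cfX_pos hx _), add_assoc]
  rfl

end ContinuedFraction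

/-- The BCF digit sequence of an irrational x is obtained from its RCF expansion by
replacing each pair (a_{2k-1}, a_{2k}) by a block of a_{2k-1} - 1 twos followed by
the digit a_{2k} + 2; the digit a_{2k} + 2 sits at BCF position N k = a_1 + a_3 + ... + a_{2k-1},
and here b_n(x) = bDigit x (n-1). -/
theorem stmt12 (x : ℝ) (hx : Irrational x) (k : ℕ) (hk : 1 ≤ k) :
    (∀ n : ℕ,
        (∑ j ∈ Finset.Icc 1 (k - 1), (rcfA x (2 * j - 1)).toNat) < n →
        n < ∑ j ∈ Finset.Icc 1 k, (rcfA x (2 * j - 1)).toNat →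
        bDigit x (n - 1) = 2) ∧
    bDigit x ((∑ j ∈ Finset.Icc 1 k, (rcfA x (2 * j - 1)).toNat) - 1)
      = rcfA x (2 * k) + 2 := by
  obtain ⟨K, rfl⟩ : ∃ K, k = K + 1 := ⟨k - 1, by omega⟩
  refine ⟨fun n hlo hhi => ?_, bDigit_bcfPos_succ_sub_one hx K⟩
  change bcfPos x K < n at hlo
  change n < bcfPos x (K + 1) at hhi
  rw [bcfPos_succ] at hhi
  obtain ⟨i, hi⟩ : ∃ i, n - 1 = bcfPos x K + i := ⟨n - 1 - bcfPos x K, by omega⟩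
  rw [hi]
  exact bDigit_eq_two hx K i (by omega)
end

section
/- For every irrational x, the backward continued fraction convergents r_n(x)/s_n(x) converge to x, where r_{-1}=1, r_0=b_0(x), r_n = b_n r_{n−1} − r_{n−2}, and s_{-1}=0, s_0=1, s_n = b_n s_{n−1} − s_{n−2}, with b_n = b_n(x) the backward continued fraction digits of x. -/
/-- BCF convergent denominators. -/
noncomputable def bcfS (x : ℝ) : ℕ → ℤ
  | 0 => 1
  | 1 => bDigit x 0
  | n + 2 => bDigit x (n + 1) * bcfS x (n + 1) - bcfS x n

/-- BCF convergent numerators. -/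
noncomputable def bcfR (x : ℝ) : ℕ → ℤ
  | 0 => ⌊x⌋ + 1
  | 1 => bDigit x 0 * (⌊x⌋ + 1) - 1
  | n + 2 => bDigit x (n + 1) * bcfR x (n + 1) - bcfR x n

open Finset

lemma renyi_mapsTo_Ico : Set.MapsTo renyi (Set.Ico 0 1) (Set.Ico 0 1) :=
  fun _ _ => ⟨Int.fract_nonneg _, Int.fract_lt_one _⟩

/-- `bcfZ x n = 1 / xₙ₊₁` for the complete quotient `xₙ₊₁ = bₙ₊₁ - 1 / (bₙ₊₂ - ⋯)`. -/
noncomputable def bcfZ (x : ℝ) (n : ℕ) : ℝ := 1 - renyi^[n] (Int.fract x)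

lemma bcfZ_zero (x : ℝ) : bcfZ x 0 = ⌊x⌋ + 1 - x := by
  rw [bcfZ, Function.iterate_zero_apply, ← Int.self_sub_floor]
  ring

lemma bcfZ_succ (x : ℝ) (n : ℕ) : bcfZ x (n + 1) = 1 - Int.fract (1 / bcfZ x n) := by
  rw [bcfZ, Function.iterate_succ_apply']
  rfl

lemma bcfZ_mem_Ioc (x : ℝ) (n : ℕ) : bcfZ x n ∈ Set.Ioc 0 1 := by
  obtain ⟨h₀, h₁⟩ := renyi_mapsTo_Ico.iterate n
    (⟨Int.fract_nonneg x, Int.fract_lt_one x⟩ : Int.fract x ∈ Set.Ico 0 1)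
  exact ⟨sub_pos.2 h₁, sub_le_self _ h₀⟩

lemma bDigit_eq (x : ℝ) (n : ℕ) : bDigit x n = ⌊1 / bcfZ x n⌋ + 1 := rfl

lemma bDigit_sub_bcfZ_succ (x : ℝ) (n : ℕ) :
    (bDigit x n : ℝ) - bcfZ x (n + 1) = 1 / bcfZ x n := by
  rw [bcfZ_succ, bDigit_eq, Int.cast_add, Int.cast_one]
  linarith [Int.floor_add_fract (1 / bcfZ x n)]

lemma bcfZ_mul_bDigit_sub_bcfZ_succ (x : ℝ) (n : ℕ) :
    bcfZ x n * ((bDigit x n : ℝ) - bcfZ x (n + 1)) = 1 := by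
  rw [bDigit_sub_bcfZ_succ, mul_one_div_cancel (bcfZ_mem_Ioc x n).1.ne']

lemma two_le_bDigit (x : ℝ) (n : ℕ) : 2 ≤ bDigit x n := by
  obtain ⟨hz₀, hz₁⟩ := bcfZ_mem_Ioc x n
  have : (1 : ℤ) ≤ ⌊1 / bcfZ x n⌋ := Int.le_floor.2 (by simpa using one_le_one_div hz₀ hz₁)
  rw [bDigit_eq]
  omega

lemma bcfS_pos_and_lt_succ (x : ℝ) (n : ℕ) : 0 < bcfS x n ∧ bcfS x n < bcfS x (n + 1) := by
  induction n with
  | zero => have := two_le_bDigit x 0; simp only [bcfS]; omega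
  | succ n ih =>
    have hb := two_le_bDigit x (n + 1)
    refine ⟨ih.1.trans ih.2, ?_⟩
    show bcfS x (n + 1) < bDigit x (n + 1) * bcfS x (n + 1) - bcfS x n
    nlinarith

lemma succ_le_bcfS (x : ℝ) (n : ℕ) : (n : ℤ) + 1 ≤ bcfS x n := by
  induction n with
  | zero => simp [bcfS]
  | succ n ih => push_cast; linarith [(bcfS_pos_and_lt_succ x n).2]

lemma mul_bcfS_sub_bcfR_succ (x : ℝ) (n : ℕ) :
    x * bcfS x (n + 1) - bcfR x (n + 1) = bcfZ x (n + 1) * (x * bcfS x n - bcfR x n) := by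
  induction n with
  | zero =>
    have hz := bcfZ_mul_bDigit_sub_bcfZ_succ x 0
    simp only [bcfS, bcfR, Int.cast_sub, Int.cast_mul, Int.cast_add, Int.cast_one]
    linear_combination ((bDigit x 0 : ℝ) - bcfZ x 1) * bcfZ_zero x - hz
  | succ n ih =>
    have hz := bcfZ_mul_bDigit_sub_bcfZ_succ x (n + 1)
    simp only [bcfS, bcfR, Int.cast_sub, Int.cast_mul]
    linear_combination ((bDigit x (n + 1) : ℝ) - bcfZ x (n + 2)) * ih +
      (x * bcfS x n - bcfR x n) * hz

lemma mul_bcfS_sub_bcfR_eq_neg_prod (x : ℝ) (n : ℕ) :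
    x * bcfS x n - bcfR x n = -∏ k ∈ range (n + 1), bcfZ x k := by
  induction n with
  | zero => simp [bcfS, bcfR, bcfZ_zero]
  | succ n ih => rw [mul_bcfS_sub_bcfR_succ, ih, prod_range_succ _ (n + 1)]; ring

lemma dist_bcfR_div_bcfS_le (x : ℝ) (n : ℕ) :
    dist ((bcfR x n : ℝ) / bcfS x n) x ≤ 1 / ((n : ℝ) + 1) := by
  have hs : (n : ℝ) + 1 ≤ bcfS x n := by exact_mod_cast succ_le_bcfS x n
  have hs₀ : (0 : ℝ) < bcfS x n := by linarith
  have hz₀ (k : ℕ) : 0 ≤ bcfZ x k := (bcfZ_mem_Ioc x k).1.le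
  have herr : |x * bcfS x n - bcfR x n| ≤ 1 := by
    rw [mul_bcfS_sub_bcfR_eq_neg_prod, abs_neg, abs_of_nonneg (prod_nonneg fun k _ => hz₀ k)]
    exact prod_le_one (fun k _ => hz₀ k) fun k _ => (bcfZ_mem_Ioc x k).2
  have hdiff : x - bcfR x n / bcfS x n = (x * bcfS x n - bcfR x n) / bcfS x n := by field_simp
  calc dist ((bcfR x n : ℝ) / bcfS x n) x
      = |x * bcfS x n - bcfR x n| / bcfS x n := by
        rw [dist_comm, Real.dist_eq, hdiff, abs_div, abs_of_pos hs₀]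
    _ ≤ 1 / bcfS x n := by gcongr
    _ ≤ 1 / ((n : ℝ) + 1) := by gcongr

theorem stmt15_general (x : ℝ) :
    Filter.Tendsto (fun n => (bcfR x n : ℝ) / (bcfS x n : ℝ)) Filter.atTop (nhds x) :=
  tendsto_iff_dist_tendsto_zero.2 <| squeeze_zero (fun _ => dist_nonneg)
    (dist_bcfR_div_bcfS_le x) tendsto_one_div_add_atTop_nhds_zero_nat

theorem stmt15 (x : ℝ) (hx : Irrational x) :
    Filter.Tendsto (fun n => (bcfR x n : ℝ) / (bcfS x n : ℝ)) Filter.atTop (nhds x) :=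
  stmt15_general x
end
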